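/- arXiv:0907.3662 — 3 statements merged into one kernel-verified Lean document; each statement's English description precedes it below -/
import Mathlib

section
/- For (a,b,c) ∈ ℤ³ define the affine function L_{abc} : ℝ³ → ℝ by L_{abc}(x) = (1+2a)x₁ + (1+2b)x₂ + (1+2c)x₃ − (a + b + c + a² + b² + c²), and define F : ℝ³ → ℝ by F(x) = L_{(⌊x₁⌋,⌊x₂⌋,⌊x₃⌋)}(x). Then for every x ∈ ℝ³ and every (a,b,c) ∈ ℤ³ one has L_{abc}(x) ≤ F(x); in particular F is the pointwise supremum of the affine functions L_{abc}, hence F is convex on ℝ³, and F agrees with L_{abc} on the unit cube C_{abc} = [a,a+1] × [b,b+1] × [c,c+1]. -/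
/-- The affine function `L_{abc}(x) = (1+2a)x₁ + (1+2b)x₂ + (1+2c)x₃ − (a+b+c+a²+b²+c²)`. -/
noncomputable def Laff (a b c : ℤ) (x : Fin 3 → ℝ) : ℝ :=
  (1 + 2 * (a : ℝ)) * x 0 + (1 + 2 * (b : ℝ)) * x 1 + (1 + 2 * (c : ℝ)) * x 2 -
    ((a : ℝ) + (b : ℝ) + (c : ℝ) + (a : ℝ) ^ 2 + (b : ℝ) ^ 2 + (c : ℝ) ^ 2)

/-- The piecewise linear lifting function `F(x) = L_{(⌊x₁⌋,⌊x₂⌋,⌊x₃⌋)}(x)`. -/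
noncomputable def Flift (x : Fin 3 → ℝ) : ℝ :=
  Laff ⌊x 0⌋ ⌊x 1⌋ ⌊x 2⌋ x

/-- The unit cube `C_{abc} = [a,a+1] × [b,b+1] × [c,c+1]` for `(a,b,c) ∈ ℤ³`. -/
def cubeZ (a b c : ℤ) : Set (Fin 3 → ℝ) :=
  {x | ((a : ℝ) ≤ x 0 ∧ x 0 ≤ a + 1) ∧ ((b : ℝ) ≤ x 1 ∧ x 1 ≤ b + 1) ∧
    ((c : ℝ) ≤ x 2 ∧ x 2 ≤ c + 1)}

private lemma key_le (t : ℝ) (a : ℤ) :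
    (1 + 2 * (a : ℝ)) * t - ((a : ℝ) + (a : ℝ) ^ 2) ≤
      (1 + 2 * (⌊t⌋ : ℝ)) * t - ((⌊t⌋ : ℝ) + (⌊t⌋ : ℝ) ^ 2) := by
  have h1 : (⌊t⌋ : ℝ) ≤ t := Int.floor_le t
  have h2 : t < ⌊t⌋ + 1 := Int.lt_floor_add_one t
  rcases lt_trichotomy a ⌊t⌋ with h | h | h
  · have h' : (a : ℝ) + 1 ≤ ⌊t⌋ := by exact_mod_cast Int.add_one_le_of_lt h
    nlinarith [mul_nonneg (by linarith : (0:ℝ) ≤ (⌊t⌋:ℝ) - a)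
      (by linarith : (0:ℝ) ≤ 2 * t - 1 - ⌊t⌋ - a)]
  · rw [h]
  · have h' : (⌊t⌋ : ℝ) + 1 ≤ a := by exact_mod_cast Int.add_one_le_of_lt h
    nlinarith [mul_nonneg (by linarith : (0:ℝ) ≤ (a:ℝ) - ⌊t⌋)
      (by linarith : (0:ℝ) ≤ 1 + ⌊t⌋ + a - 2 * t)]

private lemma key_eq (t : ℝ) (a : ℤ) (h1 : (a : ℝ) ≤ t) (h2 : t ≤ a + 1) :
    (1 + 2 * (⌊t⌋ : ℝ)) * t - ((⌊t⌋ : ℝ) + (⌊t⌋ : ℝ) ^ 2) =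
      (1 + 2 * (a : ℝ)) * t - ((a : ℝ) + (a : ℝ) ^ 2) := by
  rcases lt_or_eq_of_le h2 with h | h
  · have : ⌊t⌋ = a := by
      rw [Int.floor_eq_iff]
      · exact ⟨h1, by exact_mod_cast h⟩
    rw [this]
  · have hfl : ⌊t⌋ = a + 1 := by
      rw [h]
      exact_mod_cast Int.floor_intCast (a + 1)
    rw [hfl, h]
    push_cast
    ring

private lemma laff_le (x : Fin 3 → ℝ) (a b c : ℤ) : Laff a b c x ≤ Flift x := by
  have h0 := key_le (x 0) a
  have h1 := key_le (x 1) b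
  have h2 := key_le (x 2) c
  unfold Flift Laff
  linarith

/-- `F` dominates every `L_{abc}`, is their pointwise supremum, is convex on `ℝ³`,
and agrees with `L_{abc}` on the cube `C_{abc}`. -/
theorem lifting_function_convex :
    (∀ (x : Fin 3 → ℝ) (a b c : ℤ), Laff a b c x ≤ Flift x) ∧
    (∀ x : Fin 3 → ℝ, IsGreatest {y : ℝ | ∃ a b c : ℤ, y = Laff a b c x} (Flift x)) ∧
    ConvexOn ℝ Set.univ Flift ∧
    (∀ a b c : ℤ, ∀ x ∈ cubeZ a b c, Flift x = Laff a b c x) := by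
  refine ⟨fun x a b c => laff_le x a b c, ?_, ?_, ?_⟩
  · intro x
    constructor
    · exact ⟨⌊x 0⌋, ⌊x 1⌋, ⌊x 2⌋, rfl⟩
    · rintro y ⟨a, b, c, rfl⟩
      exact laff_le x a b c
  · refine ⟨convex_univ, fun x _ y _ s t hs ht hst => ?_⟩
    set z := s • x + t • y with hz
    have hcomb : ∀ a b c : ℤ, Laff a b c z = s * Laff a b c x + t * Laff a b c y := by
      intro a b c
      have hz0 : z 0 = s * x 0 + t * y 0 := rfl
      have hz1 : z 1 = s * x 1 + t * y 1 := rfl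
      have hz2 : z 2 = s * x 2 + t * y 2 := rfl
      unfold Laff
      rw [hz0, hz1, hz2]
      have ht' : t = 1 - s := by linarith
      rw [ht']
      ring
    calc Flift z = s * Laff ⌊z 0⌋ ⌊z 1⌋ ⌊z 2⌋ x + t * Laff ⌊z 0⌋ ⌊z 1⌋ ⌊z 2⌋ y := by
          rw [Flift, hcomb]
      _ ≤ s * Flift x + t * Flift y := by
          gcongr <;> [exact laff_le x _ _ _; exact laff_le y _ _ _]
  · rintro a b c x ⟨⟨ha1, ha2⟩, ⟨hb1, hb2⟩, ⟨hc1, hc2⟩⟩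
    have h0 := key_eq (x 0) a ha1 ha2
    have h1 := key_eq (x 1) b hb1 hb2
    have h2 := key_eq (x 2) c hc1 hc2
    unfold Flift Laff
    linarith
end

section
/- Let L_{abc}(x) = (1+2a)x₁ + (1+2b)x₂ + (1+2c)x₃ − (a + b + c + a² + b² + c²) for (a,b,c) ∈ ℤ³, and F(x) = L_{(⌊x₁⌋,⌊x₂⌋,⌊x₃⌋)}(x). If p, q ∈ ℝ³ are such that there is no single (a,b,c) ∈ ℤ³ with both p and q in the unit cube C_{abc} = [a,a+1] × [b,b+1] × [c,c+1], then for every t ∈ (0,1) one has F(t·p + (1−t)·q) < t·F(p) + (1−t)·F(q). (F is strictly convex across the cubical subdivision, so the subdivision is regular.) -/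


noncomputable def Lone (n : ℤ) (u : ℝ) : ℝ := (1 + 2 * (n : ℝ)) * u - ((n : ℝ) + (n : ℝ) ^ 2)

noncomputable def gfun (u : ℝ) : ℝ := Lone ⌊u⌋ u

lemma Lone_le_gfun (n : ℤ) (u : ℝ) : Lone n u ≤ gfun u := by
  have h1 : ((⌊u⌋ : ℤ) : ℝ) ≤ u := Int.floor_le u
  have h2 : u < (⌊u⌋ : ℝ) + 1 := Int.lt_floor_add_one u
  unfold gfun Lone
  rcases lt_trichotomy n ⌊u⌋ with hc | hc | hc
  · have : ((n : ℝ) + 1) ≤ (⌊u⌋ : ℝ) := by exact_mod_cast hc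
    nlinarith
  · subst hc; exact le_rfl
  · have hcr : ((⌊u⌋ : ℝ) + 1) ≤ (n : ℝ) := by exact_mod_cast hc
    have hx : (0:ℝ) ≤ (n : ℝ) - (⌊u⌋ : ℝ) := by linarith
    have hy : (0:ℝ) ≤ 1 + (⌊u⌋ : ℝ) + (n : ℝ) - 2 * u := by linarith
    nlinarith [mul_nonneg hx hy]

lemma eq_imp_mem (n : ℤ) (u : ℝ) (he : Lone n u = gfun u) :
    (n : ℝ) ≤ u ∧ u ≤ n + 1 := by
  have h1 : ((⌊u⌋ : ℤ) : ℝ) ≤ u := Int.floor_le u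
  have h2 : u < (⌊u⌋ : ℝ) + 1 := Int.lt_floor_add_one u
  unfold gfun Lone at he
  rcases lt_trichotomy n ⌊u⌋ with hc | hc | hc
  · have hcr : ((n : ℝ) + 1) ≤ (⌊u⌋ : ℝ) := by exact_mod_cast hc
    constructor <;> nlinarith
  · subst hc; constructor <;> linarith
  · have hcr : ((⌊u⌋ : ℝ) + 1) ≤ (n : ℝ) := by exact_mod_cast hc
    exfalso; nlinarith

lemma gfun_convex (p q t : ℝ) (ht0 : 0 < t) (ht1 : t < 1) :
    gfun (t * p + (1 - t) * q) ≤ t * gfun p + (1 - t) * gfun q := by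
  set m := t * p + (1 - t) * q
  have hm : gfun m = t * Lone ⌊m⌋ p + (1 - t) * Lone ⌊m⌋ q := by
    unfold gfun Lone; ring
  have hp := Lone_le_gfun ⌊m⌋ p
  have hq := Lone_le_gfun ⌊m⌋ q
  nlinarith

lemma gfun_strict (p q t : ℝ) (ht0 : 0 < t) (ht1 : t < 1)
    (h : ¬ ∃ n : ℤ, ((n : ℝ) ≤ p ∧ p ≤ n + 1) ∧ ((n : ℝ) ≤ q ∧ q ≤ n + 1)) :
    gfun (t * p + (1 - t) * q) < t * gfun p + (1 - t) * gfun q := by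
  set m := t * p + (1 - t) * q
  have hm : gfun m = t * Lone ⌊m⌋ p + (1 - t) * Lone ⌊m⌋ q := by
    unfold gfun Lone; ring
  have hp := Lone_le_gfun ⌊m⌋ p
  have hq := Lone_le_gfun ⌊m⌋ q
  rcases lt_or_eq_of_le hp with hp' | hp'
  · nlinarith
  · rcases lt_or_eq_of_le hq with hq' | hq'
    · nlinarith
    · exact absurd ⟨⌊m⌋, eq_imp_mem _ _ hp', eq_imp_mem _ _ hq'⟩ h

/-- `F` is strictly convex across the cubical subdivision: for two points lying in no
common unit cube, the strict convexity inequality holds. -/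
theorem lifting_function_strictly_convex (p q : Fin 3 → ℝ)
    (h : ¬ ∃ a b c : ℤ, p ∈ cubeZ a b c ∧ q ∈ cubeZ a b c) :
    ∀ t : ℝ, 0 < t → t < 1 →
      Flift (t • p + (1 - t) • q) < t * Flift p + (1 - t) * Flift q := by
  intro t ht0 ht1
  have hF : ∀ x : Fin 3 → ℝ, Flift x = gfun (x 0) + gfun (x 1) + gfun (x 2) := by
    intro x; unfold Flift Laff gfun Lone; ring
  have hev : ∀ i : Fin 3, (t • p + (1 - t) • q) i = t * p i + (1 - t) * q i := by
    intro i; simp [Pi.add_apply, Pi.smul_apply, smul_eq_mul]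
  set B : Fin 3 → Prop := fun i =>
    ∃ n : ℤ, ((n : ℝ) ≤ p i ∧ p i ≤ n + 1) ∧ ((n : ℝ) ≤ q i ∧ q i ≤ n + 1) with hB
  have hnotall : ¬ (B 0 ∧ B 1 ∧ B 2) := by
    rintro ⟨⟨a, ⟨hpa, hqa⟩⟩, ⟨b, ⟨hpb, hqb⟩⟩, ⟨c, ⟨hpc, hqc⟩⟩⟩
    exact h ⟨a, b, c, ⟨hpa, hpb, hpc⟩, ⟨hqa, hqb, hqc⟩⟩
  have key : ∀ i : Fin 3, gfun (t * p i + (1 - t) * q i) ≤ t * gfun (p i) + (1 - t) * gfun (q i) :=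
    fun i => gfun_convex (p i) (q i) t ht0 ht1
  have keys : ∀ i : Fin 3, ¬ B i →
      gfun (t * p i + (1 - t) * q i) < t * gfun (p i) + (1 - t) * gfun (q i) :=
    fun i hi => gfun_strict (p i) (q i) t ht0 ht1 hi
  rw [hF, hF, hF, hev 0, hev 1, hev 2]
  by_cases h0 : B 0
  · by_cases h1 : B 1
    · have h2 : ¬ B 2 := fun h2 => hnotall ⟨h0, h1, h2⟩
      have := keys 2 h2; have := key 0; have := key 1; nlinarith
    · have := keys 1 h1; have := key 0; have := key 2; nlinarith
  · have := keys 0 h0; have := key 1; have := key 2; nlinarith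
end

section
/- Let A = {(a,b,c) ∈ ℕ³ : a + b ≤ 1 and c ≤ 7}, a set of 24 lattice points (the lattice points of the triangular column γ₇, a unit triangle times a segment of length 7). Then there exist 6 points t₁,…,t₆ ∈ (ℂ∖{0})³ such that the only polynomial P ∈ ℂ[x₁,x₂,x₃] with support contained in A for which P and its three first partial derivatives vanish at every tᵢ is P = 0. (Equivalently: ℙ¹×ℙ² embedded in ℙ²³ via p₁*O_{ℙ¹}(7) ⊗ p₂*O_{ℙ²}(1) is not 5-defective.) -/
/-!
Write `P = f(x₃) + x₁ g(x₃) + x₂ h(x₃)` with `deg f, deg g, deg h ≤ 7` and take the points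
`tᵢ = (zᵢ², zᵢ⁴, zᵢ)` with `zᵢ = 1, …, 6`. The conditions `∂₁P(tᵢ) = ∂₂P(tᵢ) = 0` say that `g`
and `h` vanish at the `zᵢ`; given that, the other two conditions say that the restriction
`T = f + X²g + X⁴h` of `P` to the curve `z ↦ (z², z⁴, z)` has a double root at every `zᵢ`.
As `deg T ≤ 11 < 12`, `T = 0`. Then `X⁴h = -(f + X²g)` forces `deg h ≤ 5`, so `h = 0` by its
six roots; likewise `g = 0`, and finally `f = 0`.
-/

open Polynomial

theorem Nat.card_subtype_eq_card_filter_piFinset {ι : Type*} [Fintype ι] [DecidableEq ι]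
    (p : (ι → ℕ) → Prop) [DecidablePred p] (N : ℕ) (hp : ∀ v, p v → ∀ i, v i < N) :
    Nat.card {v // p v} = ((Fintype.piFinset fun _ => Finset.range N).filter p).card := by
  rw [← Nat.card_eq_finsetCard]
  refine Nat.card_congr (Equiv.subtypeEquivRight fun v => ?_)
  simpa using fun hv i => hp v hv i

theorem card_triangularColumn_latticePoints :
    Nat.card {v : Fin 3 → ℕ // v 0 + v 1 ≤ 1 ∧ v 2 ≤ 7} = 24 := by
  rw [Nat.card_subtype_eq_card_filter_piFinset _ 8 fun v hv i => by fin_cases i <;> simp <;> omega]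
  set_option maxRecDepth 100000 in decide

namespace Polynomial

theorem eq_zero_of_natDegree_lt_two_mul_card_of_isRoot_derivative {R : Type*} [CommRing R]
    [IsDomain R] {p : R[X]} {s : Finset R} (hdeg : p.natDegree < 2 * s.card)
    (hroot : ∀ a ∈ s, p.IsRoot a ∧ p.derivative.IsRoot a) : p = 0 := by
  classical
  by_contra hp
  have hle : 2 • s.val ≤ p.roots := by
    rw [Multiset.le_iff_count]
    intro a
    by_cases ha : a ∈ s
    · rw [Multiset.count_nsmul, Multiset.count_eq_one_of_mem s.nodup ha, count_roots]
      exact (one_lt_rootMultiplicity_iff_isRoot hp).2 (hroot a ha)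
    · simp [Multiset.count_eq_zero.2 ha]
  have hcard := (Multiset.card_le_card hle).trans p.card_roots'
  rw [Multiset.card_nsmul, Finset.card_val] at hcard
  omega

theorem natDegree_le_of_natDegree_X_pow_mul_le {R : Type*} [Semiring R] [Nontrivial R]
    {p : R[X]} {k n : ℕ} (h : (X ^ k * p).natDegree ≤ n + k) : p.natDegree ≤ n := by
  rcases eq_or_ne p 0 with rfl | hp
  · simp
  · rw [natDegree_X_pow_mul k hp] at h
    omega

theorem eq_zero_of_vanish_at_six_points {R : Type*} [CommRing R] [IsDomain R] {f g h : R[X]}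
    (hf : f.natDegree ≤ 7) (hg : g.natDegree ≤ 7) (hh : h.natDegree ≤ 7)
    {z : Fin 6 → R} (hz : Function.Injective z)
    (hgz : ∀ i, g.IsRoot (z i)) (hhz : ∀ i, h.IsRoot (z i))
    (hT : ∀ i, (f + X ^ 2 * g + X ^ 4 * h).IsRoot (z i))
    (hT' : ∀ i, f.derivative.eval (z i) + z i ^ 2 * g.derivative.eval (z i)
      + z i ^ 4 * h.derivative.eval (z i) = 0) :
    f = 0 ∧ g = 0 ∧ h = 0 := by
  set s := Finset.univ.map ⟨z, hz⟩
  have hs : s.card = 6 := by simp [s]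
  have hsz : ∀ {p : R → Prop}, (∀ i, p (z i)) → ∀ a ∈ s, p a := by
    intro p hp a ha
    obtain ⟨i, -, rfl⟩ := Finset.mem_map.1 ha
    exact hp i
  set T := f + X ^ 2 * g + X ^ 4 * h with hTdef
  have hX2g : (X ^ 2 * g).natDegree ≤ 9 := natDegree_mul_le_of_le (natDegree_X_pow_le 2) hg
  have hX4h : (X ^ 4 * h).natDegree ≤ 11 := natDegree_mul_le_of_le (natDegree_X_pow_le 4) hh
  have hTdeg : T.natDegree ≤ 11 := natDegree_add_le_of_degree_le
    (natDegree_add_le_of_degree_le (by omega) (by omega)) hX4h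
  have hT'root : ∀ i, T.derivative.IsRoot (z i) := by
    intro i
    have := hT' i
    simp only [hTdef, IsRoot, derivative_add, derivative_mul, derivative_X_pow, eval_add, eval_mul,
      eval_pow, eval_X, eval_C, (hgz i).eq_zero, (hhz i).eq_zero] at this ⊢
    linear_combination this
  have hT0 : T = 0 := eq_zero_of_natDegree_lt_two_mul_card_of_isRoot_derivative (s := s)
    (by omega) (hsz fun i => ⟨hT i, hT'root i⟩)
  have hh0 : h = 0 := by
    refine eq_zero_of_natDegree_lt_card_of_eval_eq_zero' h s (hsz hhz) ?_
    have : (X ^ 4 * h).natDegree ≤ 5 + 4 := by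
      rw [show X ^ 4 * h = -(f + X ^ 2 * g) by linear_combination hT0, natDegree_neg]
      exact natDegree_add_le_of_degree_le (by omega) hX2g
    have := natDegree_le_of_natDegree_X_pow_mul_le this
    omega
  have hg0 : g = 0 := by
    refine eq_zero_of_natDegree_lt_card_of_eval_eq_zero' g s (hsz hgz) ?_
    have : (X ^ 2 * g).natDegree ≤ 5 + 2 := by
      rw [show X ^ 2 * g = -f by linear_combination hT0 - X ^ 4 * hh0, natDegree_neg]
      exact hf
    have := natDegree_le_of_natDegree_X_pow_mul_le this
    omega
  exact ⟨by linear_combination hT0 - X ^ 2 * hg0 - X ^ 4 * hh0, hg0, hh0⟩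

end Polynomial

namespace MvPolynomial

variable {R : Type*} [CommRing R]

@[simp]
theorem eval_aeval_X {σ : Type*} (t : σ → R) (i : σ) (f : R[X]) :
    eval t (Polynomial.aeval (X i) f) = f.eval (t i) := by
  simp [← coe_aeval_eq_eval, ← aeval_algHom_apply]

noncomputable def triangularColumn (f g h : R[X]) : MvPolynomial (Fin 3) R :=
  Polynomial.aeval (X 2) f + X 0 * Polynomial.aeval (X 2) g + X 1 * Polynomial.aeval (X 2) h

theorem exists_eq_triangularColumn (P : MvPolynomial (Fin 3) R) (n : ℕ)
    (hP : ∀ s ∈ P.support, s 0 + s 1 ≤ 1 ∧ s 2 ≤ n) :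
    ∃ f g h : R[X], f.natDegree ≤ n ∧ g.natDegree ≤ n ∧ h.natDegree ≤ n ∧
      P = triangularColumn f g h := by
  rw [P.as_sum]
  refine Finset.sum_induction _ (fun Q => ∃ f g h : R[X], f.natDegree ≤ n ∧ g.natDegree ≤ n ∧
    h.natDegree ≤ n ∧ Q = triangularColumn f g h) ?_ ⟨0, 0, 0, by simp [triangularColumn]⟩
    fun s hs => ?_
  · rintro _ _ ⟨f, g, h, hf, hg, hh, rfl⟩ ⟨f', g', h', hf', hg', hh', rfl⟩
    refine ⟨f + f', g + g', h + h', natDegree_add_le_of_degree_le hf hf',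
      natDegree_add_le_of_degree_le hg hg', natDegree_add_le_of_degree_le hh hh', ?_⟩
    simp only [triangularColumn, map_add]
    ring
  · obtain ⟨hs01, hs2⟩ := hP s hs
    have hmon : monomial s (P.coeff s) =
        X 0 ^ s 0 * X 1 ^ s 1 * Polynomial.aeval (X 2) (.C (P.coeff s) * .X ^ s 2) := by
      simp [monomial_eq, Finsupp.prod_fintype, Fin.prod_univ_three, algebraMap_eq]
      ring
    have hdeg := (natDegree_C_mul_X_pow_le (P.coeff s) (s 2)).trans hs2
    rw [hmon]
    obtain h0 | h1 | h2 : (s 0 = 0 ∧ s 1 = 0) ∨ (s 0 = 1 ∧ s 1 = 0) ∨ (s 0 = 0 ∧ s 1 = 1) := by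
      omega
    · exact ⟨_, 0, 0, hdeg, by simp, by simp, by simp [triangularColumn, h0]⟩
    · exact ⟨0, _, 0, by simp, hdeg, by simp, by simp [triangularColumn, h1]⟩
    · exact ⟨0, 0, _, by simp, by simp, hdeg, by simp [triangularColumn, h2]⟩

theorem isRoot_of_eval_triangularColumn {f g h : R[X]} {a : R}
    (h0 : eval ![a ^ 2, a ^ 4, a] (triangularColumn f g h) = 0)
    (hd : ∀ j, eval ![a ^ 2, a ^ 4, a] (pderiv j (triangularColumn f g h)) = 0) :
    g.IsRoot a ∧ h.IsRoot a ∧ (f + Polynomial.X ^ 2 * g + Polynomial.X ^ 4 * h).IsRoot a ∧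
      f.derivative.eval a + a ^ 2 * g.derivative.eval a + a ^ 4 * h.derivative.eval a = 0 :=
  ⟨by simpa [triangularColumn, pderiv_X] using hd 0, by simpa [triangularColumn, pderiv_X] using hd 1,
    by simpa [triangularColumn] using h0, by simpa [triangularColumn, pderiv_X] using hd 2⟩

end MvPolynomial

/-- The toric variety of the triangular column `γ₇` (a unit triangle times a segment of
length 7, 24 lattice points), namely `ℙ¹×ℙ²` embedded in `ℙ²³` via
`p₁*O_{ℙ¹}(7) ⊗ p₂*O_{ℙ²}(1)`, is not 5-defective. -/
theorem column_gamma_seven_not_defective :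
    Nat.card {v : Fin 3 → ℕ // v 0 + v 1 ≤ 1 ∧ v 2 ≤ 7} = 24 ∧
    ∃ t : Fin 6 → (Fin 3 → ℂ),
      (∀ i l, t i l ≠ 0) ∧
      ∀ P : MvPolynomial (Fin 3) ℂ,
        (∀ s ∈ P.support, s 0 + s 1 ≤ 1 ∧ s 2 ≤ 7) →
        (∀ i, MvPolynomial.eval (t i) P = 0 ∧
          ∀ j, MvPolynomial.eval (t i) (MvPolynomial.pderiv j P) = 0) →
        P = 0 := by
  refine ⟨card_triangularColumn_latticePoints, ?_⟩
  let z : Fin 6 → ℂ := fun i => (i : ℕ) + 1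
  have hz0 : ∀ i, z i ≠ 0 := fun i => Nat.cast_add_one_ne_zero i
  have hz : Function.Injective z := fun i j hij => Fin.ext (by simpa [z] using hij)
  refine ⟨fun i => ![z i ^ 2, z i ^ 4, z i], fun i l => ?_, fun P hP hvanish => ?_⟩
  · fin_cases l <;> simp [hz0 i]
  · obtain ⟨f, g, h, hf, hg, hh, rfl⟩ := MvPolynomial.exists_eq_triangularColumn P 7 hP
    choose hgz hhz hT hT' using fun i =>
      MvPolynomial.isRoot_of_eval_triangularColumn (hvanish i).1 (hvanish i).2
    obtain ⟨rfl, rfl, rfl⟩ := eq_zero_of_vanish_at_six_points hf hg hh hz hgz hhz hT hT'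
    simp [MvPolynomial.triangularColumn]
end
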